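/- Let E and F be Banach lattices with E having order continuous norm, and T : E → F a disjointness preserving linear operator vanishing on an order dense ideal of E. Then for every sequence (u_n) of pairwise disjoint positive elements of E, T(u_n) = 0 for all but finitely many n. -/

import Mathlib

/-! Gliding hump. By order continuity, every `u n` splits as an element of the order dense ideal
`I`, which `T` kills, plus a positive remainder `z n ≤ u n` of arbitrarily small norm, so
`T (z n) = T (u n)`. Taking `‖z n‖` so small that `w n := m n • z n` is still summable, where
`m n ‖T (u n)‖ ≥ n`, the `w n` are pairwise disjoint, so `T` separates the term `w n` from the rest
of `x := ∑ w n` and `‖T x‖ ≥ m n ‖T (u n)‖ ≥ n` whenever `T (u n) ≠ 0`. -/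

variable {E F : Type*}
  [NormedAddCommGroup E] [Lattice E] [HasSolidNorm E] [IsOrderedAddMonoid E]
  [NormedSpace ℝ E] [CompleteSpace E]
  [NormedAddCommGroup F] [Lattice F] [HasSolidNorm F] [IsOrderedAddMonoid F]
  [NormedSpace ℝ F] [CompleteSpace F]

/-- An (order) ideal of a Banach lattice, as a set. -/
def IsIdealSet (I : Set E) : Prop :=
  (0 : E) ∈ I ∧ (∀ x y : E, x ∈ I → y ∈ I → x + y ∈ I) ∧
    (∀ (c : ℝ) (x : E), x ∈ I → c • x ∈ I) ∧
    ∀ x y : E, |x| ≤ |y| → y ∈ I → x ∈ I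

/-- A set is order dense if its disjoint complement is trivial. -/
def OrderDense (I : Set E) : Prop :=
  ∀ x : E, (∀ y ∈ I, |x| ⊓ |y| = 0) → x = 0

/-- `E` has order continuous norm: if a nonempty downward directed set has infimum `0`,
then the infimum of the norms of its elements is `0`. -/
def OrderContinuousNorm (E : Type*) [NormedAddCommGroup E] [Lattice E] [HasSolidNorm E]
    [IsOrderedAddMonoid E] : Prop :=
  ∀ A : Set E, A.Nonempty → DirectedOn (· ≥ ·) A → IsGLB A 0 →
    ⨅ x : A, ‖(x : E)‖ = 0

section LatticeOrderedGroup

variable {α : Type*} [Lattice α] [AddCommGroup α] [IsOrderedAddMonoid α] {a b c : α}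

lemma add_inf_eq_zero (ha : a ⊓ c = 0) (hb : b ⊓ c = 0) : (a + b) ⊓ c = 0 := by
  have hb₀ : 0 ≤ b := hb ▸ inf_le_left
  have hle : (a + b) ⊓ c ≤ b := sub_nonpos.mp <|
    calc (a + b) ⊓ c - b = a ⊓ (c - b) := by rw [inf_sub, add_sub_cancel_right]
      _ ≤ a ⊓ c := inf_le_inf_left a (sub_le_self c hb₀)
      _ = 0 := ha
  refine le_antisymm (hb ▸ le_inf hle inf_le_right) (le_inf ?_ (ha ▸ inf_le_right))
  exact add_nonneg (ha ▸ inf_le_left) hb₀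

lemma nsmul_inf_eq_zero (h : a ⊓ c = 0) (n : ℕ) : (n • a) ⊓ c = 0 := by
  induction n with
  | zero => simpa using h ▸ inf_le_right
  | succ n ih => rw [succ_nsmul]; exact add_inf_eq_zero ih h

lemma nsmul_inf_nsmul_eq_zero (h : a ⊓ b = 0) (m n : ℕ) : (m • a) ⊓ (n • b) = 0 :=
  nsmul_inf_eq_zero (by rw [inf_comm]; exact nsmul_inf_eq_zero (by rwa [inf_comm]) n) m

lemma abs_le_abs_add_of_abs_inf_abs_eq_zero (h : |a| ⊓ |b| = 0) : |a| ≤ |a + b| := by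
  have htri : |a| ≤ |a + b| + |b| := by simpa using abs_add_le (a + b) (-b)
  refine sub_nonpos.mp ?_
  calc |a| - |a + b| = |a| ⊓ (|a + b| + |b|) - |a + b| := by rw [inf_eq_left.mpr htri]
    _ = (|a| - |a + b|) ⊓ |b| := by rw [inf_sub, add_sub_cancel_left]
    _ ≤ |a| ⊓ |b| := inf_le_inf_right _ (sub_le_self _ (abs_nonneg _))
    _ = 0 := h

end LatticeOrderedGroup

def IsDisjointnessPreserving {G H : Type*} [Lattice G] [AddGroup G] [Lattice H] [AddGroup H]
    (T : G → H) : Prop :=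
  ∀ x y : G, |x| ⊓ |y| = 0 → |T x| ⊓ |T y| = 0

section NormedLattice

variable {G H : Type*} [NormedAddCommGroup G] [Lattice G] [HasSolidNorm G] [IsOrderedAddMonoid G]
  [NormedAddCommGroup H] [Lattice H] [HasSolidNorm H] [IsOrderedAddMonoid H]

lemma tsum_inf_eq_zero {ι : Type*} {f : ι → G} {c : G} (hc : 0 ≤ c) (hf : ∀ i, f i ⊓ c = 0)
    (hs : Summable f) : (∑' i, f i) ⊓ c = 0 := by
  refine (isClosed_eq (continuous_id.inf continuous_const) continuous_const).mem_of_tendsto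
    hs.hasSum (Filter.Eventually.of_forall fun s => ?_)
  exact Finset.sum_induction f (· ⊓ c = 0) (fun _ _ => add_inf_eq_zero) (inf_eq_left.mpr hc)
    fun i _ => hf i

lemma norm_map_le_norm_map_tsum {ι : Type*} [DecidableEq ι] {T : G →+ H}
    (hT : IsDisjointnessPreserving T) {w : ι → G} (hw : ∀ i, 0 ≤ w i)
    (hdisj : Pairwise fun i j => w i ⊓ w j = 0) (hs : Summable w) (k : ι) :
    ‖T (w k)‖ ≤ ‖T (∑' i, w i)‖ := by
  set r := ∑' i, if i = k then 0 else w i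
  have hr : Summable fun i => if i = k then 0 else w i := by
    exact (hs.update k 0).congr fun i => by simp [Function.update_apply]
  have hr₀ : 0 ≤ r := tsum_nonneg fun i => by split_ifs; exacts [le_rfl, hw i]
  have hrk : r ⊓ w k = 0 := tsum_inf_eq_zero (hw k)
    (fun i => by split_ifs with h; exacts [inf_eq_left.mpr (hw k), hdisj h]) hr
  have hTr : |T (w k)| ⊓ |T r| = 0 :=
    hT _ _ (by rw [abs_of_nonneg (hw k), abs_of_nonneg hr₀, inf_comm, hrk])
  rw [hs.tsum_eq_add_tsum_ite k, map_add]
  exact norm_le_norm_of_abs_le_abs (abs_le_abs_add_of_abs_inf_abs_eq_zero hTr)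

theorem finite_setOf_map_ne_zero_of_exists_small [CompleteSpace G] [NormedSpace ℝ H]
    {T : G →+ H} (hT : IsDisjointnessPreserving T) {u : ℕ → G}
    (hdisj : Pairwise fun m n => |u m| ⊓ |u n| = 0)
    (hsmall : ∀ n, ∀ ε > 0, ∃ z, 0 ≤ z ∧ z ≤ u n ∧ ‖z‖ < ε ∧ T z = T (u n)) :
    {n | T (u n) ≠ 0}.Finite := by
  set m : ℕ → ℕ := fun n => ⌈(n : ℝ) / ‖T (u n)‖⌉₊
  choose z hz₀ hzu hzε hTz using fun n => hsmall n ((1 / 2) ^ n / (m n + 1)) (by positivity)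
  set w : ℕ → G := fun n => m n • z n
  have hw₀ : ∀ n, 0 ≤ w n := fun n => nsmul_nonneg (hz₀ n) _
  have hzdisj : Pairwise fun i j => z i ⊓ z j = 0 := fun i j hij =>
    le_antisymm ((inf_le_inf ((hzu i).trans (le_abs_self _)) ((hzu j).trans (le_abs_self _))).trans
      (hdisj hij).le) (le_inf (hz₀ i) (hz₀ j))
  have hwdisj : Pairwise fun i j => w i ⊓ w j = 0 := fun i j hij =>
    nsmul_inf_nsmul_eq_zero (hzdisj hij) _ _
  have hwnorm : ∀ n, ‖w n‖ ≤ (1 / 2) ^ n := fun n =>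
    calc ‖w n‖ ≤ m n * ‖z n‖ := norm_nsmul_le
      _ ≤ (m n + 1) * ‖z n‖ := by gcongr; linarith
      _ ≤ (1 / 2) ^ n := by rw [← le_div_iff₀' (by positivity)]; exact (hzε n).le
  have hs : Summable w := Summable.of_norm_bounded summable_geometric_two hwnorm
  refine (Set.finite_Iic ⌊‖T (∑' n, w n)‖⌋₊).subset fun n hn => Nat.le_floor ?_
  calc (n : ℝ) = n / ‖T (u n)‖ * ‖T (u n)‖ := (div_mul_cancel₀ _ (norm_ne_zero_iff.mpr hn)).symm
    _ ≤ m n * ‖T (u n)‖ := by gcongr; exact Nat.le_ceil _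
    _ = ‖T (w n)‖ := by rw [map_nsmul, hTz, RCLike.norm_nsmul ℝ, nsmul_eq_mul]
    _ ≤ ‖T (∑' n, w n)‖ := norm_map_le_norm_map_tsum hT hw₀ hwdisj hs n

end NormedLattice

section Ideal

variable {G : Type*} [NormedAddCommGroup G] [Lattice G] [NormedSpace ℝ G] {I : Set G}

lemma IsIdealSet.nsmul_mem (hI : IsIdealSet I) {x : G} (hx : x ∈ I) (n : ℕ) : n • x ∈ I := by
  simpa only [Nat.cast_smul_eq_nsmul] using hI.2.2.1 n x hx

variable [IsOrderedAddMonoid G]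

lemma IsIdealSet.sup_mem (hI : IsIdealSet I) {x y : G} (hx₀ : 0 ≤ x) (hy₀ : 0 ≤ y) (hx : x ∈ I)
    (hy : y ∈ I) : x ⊔ y ∈ I := by
  refine hI.2.2.2 _ (x + y) ?_ (hI.2.1 x y hx hy)
  rw [abs_of_nonneg (le_sup_of_le_left hx₀), abs_of_nonneg (add_nonneg hx₀ hy₀)]
  exact sup_le (le_add_of_nonneg_right hy₀) (le_add_of_nonneg_left hx₀)

lemma directedOn_ideal_remainders (hI : IsIdealSet I) (x : G) :
    DirectedOn (· ≥ ·) {z | 0 ≤ z ∧ z ≤ x ∧ x - z ∈ I} := by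
  rintro z₁ ⟨hz₁, hzx₁, hI₁⟩ z₂ ⟨hz₂, hzx₂, hI₂⟩
  refine ⟨z₁ ⊓ z₂, ⟨le_inf hz₁ hz₂, inf_le_left.trans hzx₁, ?_⟩, inf_le_left, inf_le_right⟩
  rw [sub_inf]
  exact hI.sup_mem (sub_nonneg.mpr hzx₁) (sub_nonneg.mpr hzx₂) hI₁ hI₂

variable [HasSolidNorm G]

lemma eq_zero_of_forall_nsmul_le {d x : G} (hd : 0 ≤ d) (h : ∀ n : ℕ, n • d ≤ x) : d = 0 := by
  have hbound : ∀ n : ℕ, n * ‖d‖ ≤ ‖x‖ := fun n => by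
    have hnd : 0 ≤ n • d := nsmul_nonneg hd n
    have := norm_le_norm_of_abs_le_abs (a := n • d) (b := x)
      (by rw [abs_of_nonneg hnd, abs_of_nonneg (hnd.trans (h n))]; exact h n)
    rwa [RCLike.norm_nsmul ℝ, nsmul_eq_mul] at this
  by_contra hne
  obtain ⟨n, hn⟩ := exists_nat_gt (‖x‖ / ‖d‖)
  rw [div_lt_iff₀ (norm_pos_iff.mpr hne)] at hn
  linarith [hbound n]

lemma isGLB_ideal_remainders (hI : IsIdealSet I) (hdense : OrderDense I) {x : G} (hx : 0 ≤ x) :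
    IsGLB {z | 0 ≤ z ∧ z ≤ x ∧ x - z ∈ I} 0 := by
  refine ⟨fun z hz => hz.1, fun w hw => ?_⟩
  suffices hp : w ⊔ 0 = 0 from hp ▸ le_sup_left
  refine hdense _ fun y hy => ?_
  rw [abs_of_nonneg le_sup_right]
  -- every `x - n • d` is a remainder, so `d ≤ w⁺ ≤ x - n • d`: the multiples of `d` stay below `x`
  set d := (w ⊔ 0) ⊓ |y|
  have hd₀ : 0 ≤ d := le_inf le_sup_right (abs_nonneg y)
  have hdI : d ∈ I := hI.2.2.2 d y (by rw [abs_of_nonneg hd₀]; exact inf_le_right) hy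
  refine eq_zero_of_forall_nsmul_le (x := x) hd₀ fun n => ?_
  induction n with
  | zero => simpa using hx
  | succ n ih =>
    have hmem : x - n • d ∈ {z | 0 ≤ z ∧ z ≤ x ∧ x - z ∈ I} :=
      ⟨sub_nonneg.mpr ih, sub_le_self _ (nsmul_nonneg hd₀ n), by simpa using hI.nsmul_mem hdI n⟩
    rw [succ_nsmul]
    exact add_le_of_le_sub_left (inf_le_left.trans (sup_le (hw hmem) hmem.1))

lemma exists_small_ideal_remainder (hocn : OrderContinuousNorm G) (hI : IsIdealSet I)
    (hdense : OrderDense I) {x : G} (hx : 0 ≤ x) {ε : ℝ} (hε : 0 < ε) :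
    ∃ z, 0 ≤ z ∧ z ≤ x ∧ x - z ∈ I ∧ ‖z‖ < ε := by
  have hne : {z | 0 ≤ z ∧ z ≤ x ∧ x - z ∈ I}.Nonempty := ⟨x, hx, le_rfl, by simpa using hI.1⟩
  have hinf := hocn _ hne (directedOn_ideal_remainders hI x) (isGLB_ideal_remainders hI hdense hx)
  have := hne.to_subtype
  obtain ⟨⟨z, hz₀, hzx, hzI⟩, hzε⟩ := exists_lt_of_ciInf_lt (hinf ▸ hε)
  exact ⟨z, hz₀, hzx, hzI, hzε⟩

end Ideal

/-- If `E` has order continuous norm and the disjointness preserving operator `T`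
vanishes on an order dense ideal, then `T` kills all but finitely many members of any
pairwise disjoint sequence of positive elements. -/
theorem vanishing_on_order_dense_ideal_kills_disjoint_sequences
    (hocn : OrderContinuousNorm E)
    (T : E →ₗ[ℝ] F) (hdp : ∀ x y : E, |x| ⊓ |y| = 0 → |T x| ⊓ |T y| = 0)
    (I : Set E) (hI : IsIdealSet I) (hIdense : OrderDense I) (hTI : ∀ x ∈ I, T x = 0)
    (u : ℕ → E) (hpos : ∀ n, 0 ≤ u n)
    (hdisj : Pairwise fun m n => |u m| ⊓ |u n| = 0) :
    {n : ℕ | T (u n) ≠ 0}.Finite := by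
  refine finite_setOf_map_ne_zero_of_exists_small (T := T.toAddMonoidHom) hdp hdisj
    fun n ε hε => ?_
  obtain ⟨z, hz₀, hzu, hzI, hzε⟩ := exists_small_ideal_remainder hocn hI hIdense (hpos n) hε
  refine ⟨z, hz₀, hzu, hzε, ?_⟩
  have hTz := hTI _ hzI
  rw [map_sub, sub_eq_zero] at hTz
  exact hTz.symm
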